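/- arXiv:2212.12012 — 2 statements merged into one kernel-verified Lean document; each statement's English description precedes it below -/
import Mathlib

section
/- With L g_j = A^+ D^- g_j + A^- D^+ g_j as above (A symmetric, A^± defined via A^± = (1/2)T(M±|M|)T^T), for any periodic grid function g with values in R^N one has the positivity property: ∑_j g_j^T L g_j = (Δx/2) ∑_j (D^+ g_j)^T |A| (D^+ g_j) ≥ 0. -/
open Matrix

/-- Positivity of the advection operator: with `L g_j = A⁺ D⁻ g_j + A⁻ D⁺ g_j`,
`∑_j g_jᵀ L g_j = (Δx/2) ∑_j (D⁺ g_j)ᵀ |A| (D⁺ g_j) ≥ 0`. -/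
theorem advection_positivity (N Nx : ℕ) [NeZero Nx] (Δx : ℝ) (hΔx : 0 < Δx)
    (T : Matrix (Fin N) (Fin (N + 1)) ℝ) (μ : Fin (N + 1) → ℝ)
    (g : ZMod Nx → Fin N → ℝ) :
    (∑ j : ZMod Nx, g j ⬝ᵥ
        (((1/2 : ℝ) • (T * (Matrix.diagonal μ + Matrix.diagonal fun k => |μ k|) * Tᵀ))
            *ᵥ (Δx⁻¹ • (g j - g (j - 1)))
          + ((1/2 : ℝ) • (T * (Matrix.diagonal μ - Matrix.diagonal fun k => |μ k|) * Tᵀ))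
            *ᵥ (Δx⁻¹ • (g (j + 1) - g j)))
      = (Δx / 2) * ∑ j : ZMod Nx,
          (Δx⁻¹ • (g (j + 1) - g j)) ⬝ᵥ
            ((T * (Matrix.diagonal fun k => |μ k|) * Tᵀ) *ᵥ (Δx⁻¹ • (g (j + 1) - g j))))
    ∧ 0 ≤ (Δx / 2) * ∑ j : ZMod Nx,
          (Δx⁻¹ • (g (j + 1) - g j)) ⬝ᵥ
            ((T * (Matrix.diagonal fun k => |μ k|) * Tᵀ) *ᵥ (Δx⁻¹ • (g (j + 1) - g j))) := by
  classical
  have hΔx0 : (Δx : ℝ) ≠ 0 := ne_of_gt hΔx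
  set A : Matrix (Fin N) (Fin N) ℝ := T * Matrix.diagonal μ * Tᵀ with hA
  set B : Matrix (Fin N) (Fin N) ℝ := T * (Matrix.diagonal fun k => |μ k|) * Tᵀ with hB
  set d : ZMod Nx → Fin N → ℝ := fun j => Δx⁻¹ • (g (j + 1) - g j) with hd
  have hdj : ∀ j : ZMod Nx, Δx⁻¹ • (g (j + 1) - g j) = d j := fun j => rfl
  -- symmetry of A and B
  have hAT : Aᵀ = A := by
    simp [hA, Matrix.transpose_mul, Matrix.mul_assoc]
  have hBT : Bᵀ = B := by
    simp [hB, Matrix.transpose_mul, Matrix.mul_assoc]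
  have hsym : ∀ u v : Fin N → ℝ, u ⬝ᵥ (A *ᵥ v) = v ⬝ᵥ (A *ᵥ u) := by
    intro u v
    rw [dotProduct_mulVec, ← hAT, vecMul_transpose, dotProduct_comm, hAT]
  -- pointwise nonnegativity of the quadratic form of B
  have hpos : ∀ x : Fin N → ℝ, 0 ≤ x ⬝ᵥ (B *ᵥ x) := by
    intro x
    have h1 : x ⬝ᵥ (B *ᵥ x)
        = (Tᵀ *ᵥ x) ⬝ᵥ ((Matrix.diagonal fun k => |μ k|) *ᵥ (Tᵀ *ᵥ x)) := by
      rw [hB, ← Matrix.mulVec_mulVec, ← Matrix.mulVec_mulVec,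
        dotProduct_mulVec x T, ← Matrix.mulVec_transpose]
    rw [h1]
    refine Finset.sum_nonneg fun k _ => ?_
    have hk : ((Matrix.diagonal fun k => |μ k|) *ᵥ (Tᵀ *ᵥ x)) k
        = |μ k| * (Tᵀ *ᵥ x) k := Matrix.mulVec_diagonal _ _ _
    rw [hk]
    nlinarith [abs_nonneg (μ k), sq_nonneg ((Tᵀ *ᵥ x) k)]
  -- rewrite each summand in terms of A, B and d
  have hstep : ∀ j : ZMod Nx,
      g j ⬝ᵥ
        (((1/2 : ℝ) • (T * (Matrix.diagonal μ + Matrix.diagonal fun k => |μ k|) * Tᵀ))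
            *ᵥ (Δx⁻¹ • (g j - g (j - 1)))
          + ((1/2 : ℝ) • (T * (Matrix.diagonal μ - Matrix.diagonal fun k => |μ k|) * Tᵀ))
            *ᵥ (Δx⁻¹ • (g (j + 1) - g j)))
      = ((1/2) * (g j ⬝ᵥ (A *ᵥ d (j - 1))) + (1/2) * (g j ⬝ᵥ (B *ᵥ d (j - 1))))
        + ((1/2) * (g j ⬝ᵥ (A *ᵥ d j)) - (1/2) * (g j ⬝ᵥ (B *ᵥ d j))) := by
    intro j
    have h1 : Δx⁻¹ • (g j - g (j - 1)) = d (j - 1) := by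
      simp [hd, sub_add_cancel]
    have h2 : T * (Matrix.diagonal μ + Matrix.diagonal fun k => |μ k|) * Tᵀ = A + B := by
      rw [hA, hB, Matrix.mul_add, Matrix.add_mul]
    have h3 : T * (Matrix.diagonal μ - Matrix.diagonal fun k => |μ k|) * Tᵀ = A - B := by
      rw [hA, hB, Matrix.mul_sub, Matrix.sub_mul]
    rw [h1, h2, h3, hdj j]
    simp only [Matrix.smul_mulVec, Matrix.add_mulVec, Matrix.sub_mulVec,
      dotProduct_add, dotProduct_smul, smul_eq_mul, smul_add, smul_sub, dotProduct_sub]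
  -- reindexing lemma
  have hre : ∀ f : ZMod Nx → ℝ, ∑ j : ZMod Nx, f (j + 1) = ∑ j : ZMod Nx, f j :=
    fun f => Equiv.sum_comp (Equiv.addRight (1 : ZMod Nx)) f
  -- the main identity
  have main : (∑ j : ZMod Nx, g j ⬝ᵥ
        (((1/2 : ℝ) • (T * (Matrix.diagonal μ + Matrix.diagonal fun k => |μ k|) * Tᵀ))
            *ᵥ (Δx⁻¹ • (g j - g (j - 1)))
          + ((1/2 : ℝ) • (T * (Matrix.diagonal μ - Matrix.diagonal fun k => |μ k|) * Tᵀ))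
            *ᵥ (Δx⁻¹ • (g (j + 1) - g j))))
      = (Δx / 2) * ∑ j : ZMod Nx, d j ⬝ᵥ (B *ᵥ d j) := by
    rw [Finset.sum_congr rfl fun j _ => hstep j]
    rw [Finset.sum_add_distrib]
    have hre1 : (∑ j : ZMod Nx,
        ((1/2) * (g j ⬝ᵥ (A *ᵥ d (j - 1))) + (1/2) * (g j ⬝ᵥ (B *ᵥ d (j - 1)))))
        = ∑ j : ZMod Nx,
          ((1/2) * (g (j + 1) ⬝ᵥ (A *ᵥ d j)) + (1/2) * (g (j + 1) ⬝ᵥ (B *ᵥ d j))) := by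
      rw [← hre (fun j => (1/2) * (g j ⬝ᵥ (A *ᵥ d (j - 1))) + (1/2) * (g j ⬝ᵥ (B *ᵥ d (j - 1))))]
      exact Finset.sum_congr rfl fun j _ => by rw [add_sub_cancel_right]
    rw [hre1, ← Finset.sum_add_distrib]
    -- pointwise identity for the combined summand
    have hpt : ∀ j : ZMod Nx,
        ((1/2) * (g (j + 1) ⬝ᵥ (A *ᵥ d j)) + (1/2) * (g (j + 1) ⬝ᵥ (B *ᵥ d j)))
          + ((1/2) * (g j ⬝ᵥ (A *ᵥ d j)) - (1/2) * (g j ⬝ᵥ (B *ᵥ d j)))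
        = ((1/2) * Δx⁻¹ * (g (j + 1) ⬝ᵥ (A *ᵥ g (j + 1))) - (1/2) * Δx⁻¹ * (g j ⬝ᵥ (A *ᵥ g j)))
          + (Δx / 2) * (d j ⬝ᵥ (B *ᵥ d j)) := by
      intro j
      have hdel : g (j + 1) - g j = Δx • d j := by
        simp [hd, smul_smul, mul_inv_cancel₀ hΔx0]
      -- B part
      have hBpart : g (j + 1) ⬝ᵥ (B *ᵥ d j) - g j ⬝ᵥ (B *ᵥ d j) = Δx * (d j ⬝ᵥ (B *ᵥ d j)) := by
        rw [← sub_dotProduct, hdel, smul_dotProduct, smul_eq_mul]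
      -- A part
      have hApart : g (j + 1) ⬝ᵥ (A *ᵥ d j) + g j ⬝ᵥ (A *ᵥ d j)
          = Δx⁻¹ * (g (j + 1) ⬝ᵥ (A *ᵥ g (j + 1))) - Δx⁻¹ * (g j ⬝ᵥ (A *ᵥ g j)) := by
        have hs := hsym (g j) (g (j + 1))
        have hu : A *ᵥ d j = Δx⁻¹ • (A *ᵥ g (j + 1) - A *ᵥ g j) := by
          simp [hd, Matrix.mulVec_smul, Matrix.mulVec_sub]
        rw [hu]
        simp only [dotProduct_smul, dotProduct_sub, smul_eq_mul]
        linear_combination Δx⁻¹ * hs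
      linarith
    rw [Finset.sum_congr rfl fun j _ => hpt j, Finset.sum_add_distrib, Finset.sum_sub_distrib]
    have htel : (∑ j : ZMod Nx, (1/2) * Δx⁻¹ * (g (j + 1) ⬝ᵥ (A *ᵥ g (j + 1))))
        = ∑ j : ZMod Nx, (1/2) * Δx⁻¹ * (g j ⬝ᵥ (A *ᵥ g j)) :=
      hre (fun j => (1/2) * Δx⁻¹ * (g j ⬝ᵥ (A *ᵥ g j)))
    rw [htel, sub_self, zero_add, ← Finset.mul_sum]
  constructor
  · rw [main]
  · have : (0:ℝ) ≤ ∑ j : ZMod Nx,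
        (Δx⁻¹ • (g (j + 1) - g j)) ⬝ᵥ (B *ᵥ (Δx⁻¹ • (g (j + 1) - g j))) :=
      Finset.sum_nonneg fun j _ => hpos _
    have h2 : (0:ℝ) ≤ Δx / 2 := by linarith
    exact mul_nonneg h2 this
end

section
/- With the advection operator L as above, for any two periodic grid functions g, h with values in R^N one has: ∑_j h_j^T L g_j = (Δx/2) ∑_j (D^+ h_j)^T |A| (D^+ h_j) + ∑_j (h_j - g_j)^T (A^+ D^+ + A^- D^-) h_j. -/
open Matrix

/-- Identity for the advection operator tested against another grid function:
`∑_j h_jᵀ L g_j = (Δx/2) ∑_j (D⁺ h_j)ᵀ |A| (D⁺ h_j)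
  + ∑_j (h_j - g_j)ᵀ (A⁺ D⁺ + A⁻ D⁻) h_j`. -/
theorem advection_cross_identity (N Nx : ℕ) [NeZero Nx] (Δx : ℝ) (hΔx : 0 < Δx)
    (T : Matrix (Fin N) (Fin (N + 1)) ℝ) (μ : Fin (N + 1) → ℝ)
    (g h : ZMod Nx → Fin N → ℝ) :
    ∑ j : ZMod Nx, h j ⬝ᵥ
        (((1/2 : ℝ) • (T * (Matrix.diagonal μ + Matrix.diagonal fun k => |μ k|) * Tᵀ))
            *ᵥ (Δx⁻¹ • (g j - g (j - 1)))
          + ((1/2 : ℝ) • (T * (Matrix.diagonal μ - Matrix.diagonal fun k => |μ k|) * Tᵀ))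
            *ᵥ (Δx⁻¹ • (g (j + 1) - g j)))
    = (Δx / 2) * (∑ j : ZMod Nx,
          (Δx⁻¹ • (h (j + 1) - h j)) ⬝ᵥ
            ((T * (Matrix.diagonal fun k => |μ k|) * Tᵀ) *ᵥ (Δx⁻¹ • (h (j + 1) - h j))))
      + ∑ j : ZMod Nx, (h j - g j) ⬝ᵥ
          (((1/2 : ℝ) • (T * (Matrix.diagonal μ + Matrix.diagonal fun k => |μ k|) * Tᵀ))
              *ᵥ (Δx⁻¹ • (h (j + 1) - h j))
            + ((1/2 : ℝ) • (T * (Matrix.diagonal μ - Matrix.diagonal fun k => |μ k|) * Tᵀ))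
              *ᵥ (Δx⁻¹ • (h j - h (j - 1)))) := by
  have hne : Δx ≠ 0 := hΔx.ne'
  have quad : ∀ (d : Fin (N+1) → ℝ) (x y : Fin N → ℝ),
      x ⬝ᵥ ((T * Matrix.diagonal d * Tᵀ) *ᵥ y) = ∑ k, d k * ((Tᵀ *ᵥ x) k * (Tᵀ *ᵥ y) k) := by
    intro d x y
    rw [← Matrix.mulVec_mulVec, ← Matrix.mulVec_mulVec, Matrix.dotProduct_mulVec,
      ← Matrix.mulVec_transpose]
    simp [dotProduct, Matrix.mulVec_diagonal]
    exact Finset.sum_congr rfl fun k _ => by ring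
  have shift : ∀ f : ZMod Nx → ℝ, ∑ j, f (j+1) = ∑ j, f j := fun f =>
    Equiv.sum_comp (Equiv.addRight (1 : ZMod Nx)) f
  have shift' : ∀ f : ZMod Nx → ℝ, ∑ j, f (j-1) = ∑ j, f j := fun f =>
    Equiv.sum_comp (Equiv.subRight (1 : ZMod Nx)) f
  let H : ZMod Nx → Fin (N+1) → ℝ := fun j => Tᵀ *ᵥ h j
  let G : ZMod Nx → Fin (N+1) → ℝ := fun j => Tᵀ *ᵥ g j
  set Φ : ZMod Nx → ℝ := fun j => ∑ k, (Δx⁻¹/2) *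
      (μ k * (G (j-1) k * H j k) + |μ k| * (G (j-1) k * H j k - (H j k)^2)) with hΦ
  set Ψ : ZMod Nx → ℝ := fun j => ∑ k, (Δx⁻¹/2) *
      (μ k * (H j k * H (j+1) k - G (j+1) k * H j k)
        + |μ k| * (G (j+1) k * H j k - H j k * H (j+1) k)) with hΨ
  have tele : ∑ j : ZMod Nx, ((Φ (j+1) - Φ j) + (Ψ (j-1) - Ψ j)) = 0 := by
    rw [Finset.sum_add_distrib, Finset.sum_sub_distrib, Finset.sum_sub_distrib,
      shift (fun j => Φ j), shift' (fun j => Ψ j)]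
    ring
  rw [← sub_eq_zero]
  simp only [Matrix.diagonal_add, Matrix.diagonal_sub, Matrix.smul_mulVec,
    Matrix.mulVec_smul, dotProduct_add, dotProduct_smul, smul_dotProduct, smul_eq_mul,
    dotProduct_sub, sub_dotProduct, quad, Pi.add_apply, Pi.sub_apply, Pi.smul_apply,
    Matrix.mulVec_sub, Finset.mul_sum]
  rw [← Finset.sum_add_distrib, ← Finset.sum_sub_distrib, ← tele]
  refine Finset.sum_congr rfl fun j _ => ?_
  rw [← sub_eq_zero]
  simp only [hΦ, hΨ, H, G, add_sub_cancel_right, sub_add_cancel, Finset.mul_sum,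
    ← Finset.sum_sub_distrib, ← Finset.sum_add_distrib]
  refine Finset.sum_eq_zero fun k _ => ?_
  field_simp
  ring
end
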